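/- Variance reduction identity: in the discrete diffusion process with n steps, E[x_{n−1} − x_n | x_n] = (1/n)·E[x_0 − x_n | x_n]; equivalently E[x_{n−1} | x_n] = (1/n)·E[x_0 | x_n] + (1 − 1/n)·x_n. -/

import Mathlib

open MeasureTheory ProbabilityTheory
open scoped NNReal

section Aux

lemma integrable_id_gaussian (s : ℝ≥0) (hs : 0 < s) :
    Integrable (fun x : ℝ => x) (gaussianReal 0 (s^2)) := by
  have hv : (s^2 : ℝ≥0) ≠ 0 := by positivity
  rw [gaussianReal_of_var_ne_zero _ hv]
  rw [integrable_withDensity_iff (measurable_gaussianPDF _ _) (ae_of_all _ fun x => ENNReal.ofReal_lt_top)]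
  have hb : (0:ℝ) < 1 / (2 * (s^2 : ℝ≥0)) := by positivity
  have := (integrable_rpow_mul_exp_neg_mul_sq hb (s := 1) (by norm_num)).const_mul
    ((Real.sqrt (2 * Real.pi * (s^2:ℝ≥0)))⁻¹)
  refine this.congr (ae_of_all _ fun y => ?_)
  simp only
  rw [gaussianPDF, ENNReal.toReal_ofReal (gaussianPDFReal_nonneg _ _ _), gaussianPDFReal,
    Real.rpow_one]
  simp only [sub_zero]
  ring_nf

noncomputable def gmeas (s : ℝ≥0) : ℕ → Measure ℝ
  | 0 => Measure.dirac 0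
  | (k+1) => ((gmeas s k).prod (gaussianReal 0 (s^2))).map (fun p => p.1 + p.2)

instance gmeas_prob (s : ℝ≥0) (k : ℕ) : IsProbabilityMeasure (gmeas s k) := by
  induction k with
  | zero => rw [gmeas]; infer_instance
  | succ k ih => rw [gmeas]; exact Measure.isProbabilityMeasure_map (measurable_fst.add measurable_snd).aemeasurable

lemma map_sum_gmeas {Ω} [MeasurableSpace Ω] (μ : Measure Ω) [IsProbabilityMeasure μ]
    (s : ℝ≥0) (η : ℕ → Ω → ℝ) (hη : ∀ i, Measurable (η i))
    (hηlaw : ∀ i, μ.map (η i) = gaussianReal 0 (s ^ 2))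
    (hηindep : iIndepFun η μ)
    (S : Finset ℕ) : μ.map (fun ω => ∑ j ∈ S, η j ω) = gmeas s S.card := by
  classical
  induction S using Finset.induction_on with
  | empty => simp [gmeas, Measure.map_const]
  | @insert a S ha ih =>
    have hW : Measurable (fun ω => ∑ j ∈ S, η j ω) := by
      exact Finset.measurable_sum S (fun j _ => hη j)
    have hsum_eq : (∑ j ∈ S, η j) = fun ω => ∑ j ∈ S, η j ω := by
      ext ω; simp [Finset.sum_apply]
    have hind : IndepFun (fun ω => ∑ j ∈ S, η j ω) (η a) μ := by
      have h := hηindep.indepFun_finsetSum_of_notMem hη ha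
      rwa [hsum_eq] at h
    have hpair : μ.map (fun ω => ((∑ j ∈ S, η j ω), η a ω))
        = (gmeas s S.card).prod (gaussianReal 0 (s^2)) := by
      rw [(indepFun_iff_map_prod_eq_prod_map_map hW.aemeasurable (hη a).aemeasurable).mp hind,
        ih, hηlaw]
    have hfun : (fun ω => ∑ j ∈ insert a S, η j ω)
        = (fun p : ℝ × ℝ => p.1 + p.2) ∘ (fun ω => ((∑ j ∈ S, η j ω), η a ω)) := by
      ext ω
      simp [Finset.sum_insert ha, add_comm]
    rw [hfun, ← Measure.map_map (g := fun p : ℝ × ℝ => p.1 + p.2) (measurable_fst.add measurable_snd) (hW.prodMk (hη a)),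
      hpair, Finset.card_insert_of_notMem ha, gmeas]

lemma combined_indep {Ω : Type*} [m : MeasurableSpace Ω] (μ : Measure Ω) [IsProbabilityMeasure μ]
    (x₀ : Ω → ℝ) (η : ℕ → Ω → ℝ)
    (hηindep : iIndepFun η μ)
    (hindep : IndepFun x₀ (fun ω => (fun i => η i ω)) μ) :
    iIndepFun 
      (fun i => Nat.rec x₀ (fun k _ => η k) i : ℕ → Ω → ℝ) μ := by
  classical
  rw [iIndepFun_iff (fun _ => Real.measurableSpace)]
  intro s f' H
  set s₁ := s.erase 0 with hs₁
  set S := s₁.image Nat.pred with hS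
  have himg : s₁ = S.image Nat.succ := by
    ext i
    simp only [hS, Finset.mem_image, Finset.mem_erase, hs₁]
    constructor
    · intro hi
      exact ⟨i - 1, ⟨i, hi, rfl⟩, Nat.succ_pred_eq_of_ne_zero hi.1⟩
    · rintro ⟨j, ⟨a, ha, rfl⟩, rfl⟩
      exact ⟨Nat.succ_ne_zero _, by
        have := Nat.succ_pred_eq_of_ne_zero ha.1
        rw [this]; exact ha.2⟩
  have hmem : ∀ j ∈ S, j + 1 ∈ s := by
    intro j hj
    have : j + 1 ∈ s₁ := by rw [himg]; exact Finset.mem_image_of_mem _ hj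
    exact Finset.mem_of_mem_erase this
  have hmeas' : ∀ j ∈ S, MeasurableSet[Real.measurableSpace.comap (η j)] (f' (j + 1)) :=
    fun j hj => H (j + 1) (hmem j hj)
  have h1 : ⋂ i ∈ s₁, f' i = ⋂ j ∈ S, f' (j + 1) := by
    rw [himg, Finset.set_biInter_finset_image]
  have h2 : ∏ i ∈ s₁, μ (f' i) = ∏ j ∈ S, μ (f' (j + 1)) := by
    rw [himg, Finset.prod_image (fun a _ b _ h => Nat.succ_injective h)]
  have hη_part : μ (⋂ i ∈ s₁, f' i) = ∏ i ∈ s₁, μ (f' i) := by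
    rw [h1, h2]
    exact hηindep.meas_biInter hmeas'
  by_cases h0 : 0 ∈ s
  · have hBex : ∀ j : ℕ, ∃ B : Set ℝ, MeasurableSet B ∧ (j ∈ S → η j ⁻¹' B = f' (j + 1)) := by
      intro j
      by_cases hj : j ∈ S
      · obtain ⟨B, hB, hBeq⟩ := hmeas' j hj
        exact ⟨B, hB, fun _ => hBeq⟩
      · exact ⟨∅, MeasurableSet.empty, fun h => absurd h hj⟩
    choose B hBm hBe using hBex
    obtain ⟨A, hA, hAeq⟩ := H 0 h0
    set D : Set (ℕ → ℝ) := ⋂ j ∈ S, (fun v : ℕ → ℝ => v j) ⁻¹' B j with hD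
    have hDm : MeasurableSet D := by
      exact MeasurableSet.biInter (S : Set ℕ).to_countable
        (fun j _ => measurable_pi_apply j (hBm j))
    have hC : ⋂ i ∈ s₁, f' i = (fun ω => (fun i => η i ω)) ⁻¹' D := by
      rw [h1, hD]
      simp only [Set.preimage_iInter]
      exact Set.iInter₂_congr fun j hj => by rw [← hBe j hj]; rfl
    have hkey := hindep.measure_inter_preimage_eq_mul A D hA hDm
    have hsplit : s = insert 0 s₁ := (Finset.insert_erase h0).symm
    rw [hsplit, Finset.set_biInter_insert, Finset.prod_insert (Finset.notMem_erase 0 s)]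
    rw [← hη_part, ← hAeq, hC]
    exact hkey
  · rw [← Finset.erase_eq_of_notMem h0]
    exact hη_part

end Aux

/-- Variance reduction identity: in the discrete diffusion process
`x_k = x₀ + ∑_{i<k} η_i` with `n` i.i.d. Gaussian steps independent of `x₀`,
`E[x_{n-1} - x_n | x_n] = (1/n)·E[x₀ - x_n | x_n]`, and equivalently
`E[x_{n-1} | x_n] = (1/n)·E[x₀ | x_n] + (1 - 1/n)·x_n`, almost surely. -/
theorem stmt_9 {Ω : Type*} [m : MeasurableSpace Ω] (μ : Measure Ω) [IsProbabilityMeasure μ]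
    (n : ℕ) (hn : 0 < n) (s : ℝ≥0) (hs : 0 < s)
    (x₀ : Ω → ℝ) (η : ℕ → Ω → ℝ)
    (hx₀ : Measurable x₀) (hx₀int : Integrable x₀ μ) (hη : ∀ i, Measurable (η i))
    (hηlaw : ∀ i, μ.map (η i) = gaussianReal 0 (s ^ 2))
    (hηindep : iIndepFun η μ)
    (hindep : IndepFun x₀ (fun ω => (fun i => η i ω)) μ)
    (x : ℕ → Ω → ℝ) (hx : ∀ k ω, x k ω = x₀ ω + ∑ i ∈ Finset.range k, η i ω) :
    (μ[fun ω => x (n - 1) ω - x n ω | MeasurableSpace.comap (x n) Real.measurableSpace]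
        =ᵐ[μ] fun ω =>
          (n : ℝ)⁻¹ *
            (μ[fun ω' => x₀ ω' - x n ω' |
                MeasurableSpace.comap (x n) Real.measurableSpace]) ω) ∧
      μ[x (n - 1) | MeasurableSpace.comap (x n) Real.measurableSpace]
        =ᵐ[μ] fun ω =>
          (n : ℝ)⁻¹ * (μ[x₀ | MeasurableSpace.comap (x n) Real.measurableSpace]) ω
            + (1 - (n : ℝ)⁻¹) * x n ω := by
  classical
  obtain ⟨k, rfl⟩ : ∃ k, n = k + 1 := ⟨n - 1, (Nat.succ_pred_eq_of_pos hn).symm⟩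
  simp only [Nat.add_sub_cancel]
  set N := k + 1 with hN
  have hn0 : (N : ℝ) ≠ 0 := by positivity
  -- basic facts
  have hxfun : ∀ j, x j = fun ω => x₀ ω + ∑ i ∈ Finset.range j, η i ω := fun j => funext (hx j)
  have hWm : ∀ S : Finset ℕ, Measurable (fun ω => ∑ j ∈ S, η j ω) :=
    fun S => Finset.measurable_sum S (fun j _ => hη j)
  have hxm : ∀ j, Measurable (x j) := by
    intro j; rw [hxfun j]; exact hx₀.add (hWm _)
  have hm'le : (MeasurableSpace.comap (x N) Real.measurableSpace) ≤ m := (hxm N).comap_le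
  haveI : SigmaFinite (μ.trim hm'le) := inferInstance
  have hηint : ∀ i, Integrable (η i) μ := by
    intro i
    have h1 : Integrable (fun y : ℝ => y) (μ.map (η i)) := by
      rw [hηlaw]; exact integrable_id_gaussian s hs
    exact (integrable_map_measure aestronglyMeasurable_id (hη i).aemeasurable).mp h1
  have hWint : ∀ S : Finset ℕ, Integrable (fun ω => ∑ j ∈ S, η j ω) μ := by
    intro S
    exact integrable_finset_sum S (fun i _ => hηint i)
  have hxint : ∀ j, Integrable (x j) μ := by
    intro j; rw [hxfun j]; exact hx₀int.add (hWint _)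
  -- combined independence
  set G : ℕ → Ω → ℝ := fun i => Nat.rec x₀ (fun k _ => η k) i with hGdef
  have hG : iIndepFun G μ :=
    combined_indep μ x₀ η hηindep hindep
  have hGm : ∀ i, Measurable (G i) := by
    intro i; cases i with
    | zero => exact hx₀
    | succ j => exact hη j
  -- law of the pair (η i, x N) does not depend on i < N
  set Λ : Measure (ℝ × ℝ) :=
    (((((μ.map x₀).prod (gmeas s k)).map (fun p : ℝ × ℝ => p.1 + p.2)).prod
      (gaussianReal 0 (s^2))).map (fun p : ℝ × ℝ => (p.2, p.1 + p.2))) with hΛdef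
  have hlaw : ∀ i ∈ Finset.range N, μ.map (fun ω => (η i ω, x N ω)) = Λ := by
    intro i hi
    have hiN : i < N := Finset.mem_range.mp hi
    set S : Finset ℕ := (Finset.range N).erase i with hSdef
    have hScard : S.card = k := by
      rw [hSdef, Finset.card_erase_of_mem hi, Finset.card_range]
      omega
    set W : Ω → ℝ := fun ω => ∑ j ∈ S, η j ω with hWdef
    set R : Ω → ℝ := fun ω => x₀ ω + W ω with hRdef
    have hRm : Measurable R := hx₀.add (hWm S)
    have hxnR : x N = fun ω => R ω + η i ω := by
      rw [hxfun N]
      funext ω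
      simp only [hRdef, hWdef]
      rw [add_assoc, Finset.sum_erase_add (Finset.range N) _ hi]
    -- independence of x₀ and W
    have h0img : (0 : ℕ) ∉ S.image Nat.succ := by simp
    have hsum_img : (∑ j ∈ S.image Nat.succ, G j) = W := by
      funext ω
      rw [Finset.sum_apply]
      rw [Finset.sum_image (fun a _ b _ h => Nat.succ_injective h)]
    have hiWx : IndepFun x₀ W μ := by
      have h := hG.indepFun_finsetSum_of_notMem hGm h0img
      rw [hsum_img] at h
      exact h.symm
    have hpair1 : μ.map (fun ω => (x₀ ω, W ω)) = (μ.map x₀).prod (gmeas s k) := by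
      rw [(indepFun_iff_map_prod_eq_prod_map_map hx₀.aemeasurable (hWm S).aemeasurable).mp hiWx,
        map_sum_gmeas μ s η hη hηlaw hηindep S, hScard]
    have hmapR : μ.map R = ((μ.map x₀).prod (gmeas s k)).map (fun p : ℝ × ℝ => p.1 + p.2) := by
      have : R = (fun p : ℝ × ℝ => p.1 + p.2) ∘ (fun ω => (x₀ ω, W ω)) := rfl
      rw [this, ← Measure.map_map (g := fun p : ℝ × ℝ => p.1 + p.2) (measurable_fst.add measurable_snd) (hx₀.prodMk (hWm S)),
        hpair1]
    -- independence of R and η i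
    have hiT : (i + 1) ∉ insert 0 (S.image Nat.succ) := by
      intro hmem
      rcases Finset.mem_insert.mp hmem with h | h
      · exact Nat.succ_ne_zero i h
      · obtain ⟨a, ha, hc⟩ := Finset.mem_image.mp h
        cases Nat.succ_injective hc
        exact (Finset.notMem_erase i _) ha
    have hsum_T : (∑ j ∈ insert 0 (S.image Nat.succ), G j) = R := by
      funext ω
      rw [Finset.sum_apply, Finset.sum_insert h0img,
        Finset.sum_image (fun a _ b _ h => Nat.succ_injective h)]
      rfl
    have hiRη : IndepFun R (η i) μ := by
      have h := hG.indepFun_finsetSum_of_notMem hGm hiT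
      rw [hsum_T] at h
      exact h
    have hpair2 : μ.map (fun ω => (R ω, η i ω))
        = (((μ.map x₀).prod (gmeas s k)).map (fun p : ℝ × ℝ => p.1 + p.2)).prod
          (gaussianReal 0 (s^2)) := by
      rw [(indepFun_iff_map_prod_eq_prod_map_map hRm.aemeasurable (hη i).aemeasurable).mp hiRη,
        hmapR, hηlaw]
    have hcomp : (fun ω => (η i ω, x N ω))
        = (fun p : ℝ × ℝ => (p.2, p.1 + p.2)) ∘ (fun ω => (R ω, η i ω)) := by
      funext ω
      rw [show x N ω = R ω + η i ω from congrFun hxnR ω]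
      rfl
    rw [hcomp, ← Measure.map_map (g := fun p : ℝ × ℝ => (p.2, p.1 + p.2)) (measurable_snd.prodMk (measurable_fst.add measurable_snd))
      (hRm.prodMk (hη i)), hpair2]
  -- key set-integral identity
  have hkeyint : ∀ i ∈ Finset.range N, ∀ A : Set ℝ, MeasurableSet A →
      ∫ ω in (x N) ⁻¹' A, η i ω ∂μ = ∫ ω in (x N) ⁻¹' A, η k ω ∂μ := by
    have step : ∀ j ∈ Finset.range N, ∀ A : Set ℝ, MeasurableSet A →
        ∫ ω in (x N) ⁻¹' A, η j ω ∂μ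
          = ∫ p, p.1 * A.indicator (fun _ => (1:ℝ)) p.2 ∂Λ := by
      intro j hj A hA
      have hFm : Measurable (fun p : ℝ × ℝ => p.1 * A.indicator (fun _ => (1:ℝ)) p.2) :=
        measurable_fst.mul ((measurable_const.indicator hA).comp measurable_snd)
      rw [← integral_indicator ((hxm N) hA)]
      have hind_eq : ((x N) ⁻¹' A).indicator (η j)
          = fun ω => (fun p : ℝ × ℝ => p.1 * A.indicator (fun _ => (1:ℝ)) p.2) (η j ω, x N ω) := by
        funext ω
        by_cases hω : x N ω ∈ A <;>
          simp [Set.indicator_apply, hω]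
      rw [hind_eq, ← hlaw j hj,
        integral_map ((hη j).prodMk (hxm N)).aemeasurable hFm.aestronglyMeasurable]
    intro i hi A hA
    rw [step i hi A hA, ← step k (by simp [hN]) A hA]
  -- conditional expectations of all η i agree
  have hcA : ∀ i ∈ Finset.range N, μ[η k | (MeasurableSpace.comap (x N) Real.measurableSpace)] =ᵐ[μ] μ[η i | (MeasurableSpace.comap (x N) Real.measurableSpace)] := by
    intro i hi
    refine ae_eq_condExp_of_forall_setIntegral_eq hm'le (hηint i)
      (fun t ht hμt => integrable_condExp.integrableOn) (fun t ht hμt => ?_)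
      stronglyMeasurable_condExp.aestronglyMeasurable
    obtain ⟨A, hA, rfl⟩ := ht
    have ht' : MeasurableSet[(MeasurableSpace.comap (x N) Real.measurableSpace)] (x N ⁻¹' A) := ⟨A, hA, rfl⟩
    rw [setIntegral_condExp hm'le (hηint k) ht']
    exact (hkeyint i hi A hA).symm
  -- conditional expectation of the sum
  set C : Ω → ℝ := μ[η k | (MeasurableSpace.comap (x N) Real.measurableSpace)] with hCdef
  have hsum_condExp : μ[fun ω => ∑ i ∈ Finset.range N, η i ω | (MeasurableSpace.comap (x N) Real.measurableSpace)]
      =ᵐ[μ] fun ω => (N : ℝ) * C ω := by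
    have h1 : μ[fun ω => ∑ i ∈ Finset.range N, η i ω | (MeasurableSpace.comap (x N) Real.measurableSpace)]
        =ᵐ[μ] ∑ i ∈ Finset.range N, μ[η i | (MeasurableSpace.comap (x N) Real.measurableSpace)] := by
      have : (fun ω => ∑ i ∈ Finset.range N, η i ω) = ∑ i ∈ Finset.range N, η i := by
        funext ω; rw [Finset.sum_apply]
      rw [this]
      exact condExp_finsetSum (fun i _ => hηint i) _
    have hall : ∀ᵐ ω ∂μ, ∀ i ∈ Finset.range N, C ω = (μ[η i | (MeasurableSpace.comap (x N) Real.measurableSpace)]) ω := by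
      rw [Filter.eventually_all_finset]
      intro i hi
      exact hcA i hi
    refine h1.trans ?_
    filter_upwards [hall] with ω hω
    rw [Finset.sum_apply]
    have : ∑ i ∈ Finset.range N, (μ[η i | (MeasurableSpace.comap (x N) Real.measurableSpace)]) ω = ∑ i ∈ Finset.range N, C ω :=
      Finset.sum_congr rfl fun i hi => (hω i hi).symm
    rw [this, Finset.sum_const, Finset.card_range, nsmul_eq_mul]
  -- condExp of x N is x N
  have hxNcond : μ[x N | (MeasurableSpace.comap (x N) Real.measurableSpace)] = x N := by
    refine condExp_of_stronglyMeasurable hm'le ?_ (hxint N)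
    exact Measurable.stronglyMeasurable (Measurable.of_comap_le le_rfl)
  -- relation: N * C = x N - μ[x₀|(MeasurableSpace.comap (x N) Real.measurableSpace)] a.e.
  have hrel : ∀ᵐ ω ∂μ, (N : ℝ) * C ω = x N ω - (μ[x₀ | (MeasurableSpace.comap (x N) Real.measurableSpace)]) ω := by
    have e : (fun ω => ∑ i ∈ Finset.range N, η i ω) = fun ω => x N ω - x₀ ω := by
      funext ω; rw [hx N ω]; ring
    have h2 : μ[fun ω => x N ω - x₀ ω | (MeasurableSpace.comap (x N) Real.measurableSpace)] =ᵐ[μ] fun ω => x N ω - (μ[x₀ | (MeasurableSpace.comap (x N) Real.measurableSpace)]) ω := by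
      have h3 := condExp_sub (m := (MeasurableSpace.comap (x N) Real.measurableSpace)) (hxint N) hx₀int
      refine h3.trans ?_
      rw [hxNcond]
      exact Filter.EventuallyEq.rfl
    have h4 : μ[fun ω => ∑ i ∈ Finset.range N, η i ω | (MeasurableSpace.comap (x N) Real.measurableSpace)]
        =ᵐ[μ] fun ω => x N ω - (μ[x₀ | (MeasurableSpace.comap (x N) Real.measurableSpace)]) ω := by
      rw [e]; exact h2
    filter_upwards [hsum_condExp.symm.trans h4] with ω hω
    exact hω
  constructor
  · -- first identity
    have e1 : (fun ω => x k ω - x N ω) = fun ω => -(η k ω) := by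
      funext ω
      rw [hx k ω, hx N ω, hN, Finset.sum_range_succ]
      ring
    have l1 : μ[fun ω => x k ω - x N ω | (MeasurableSpace.comap (x N) Real.measurableSpace)] =ᵐ[μ] fun ω => -C ω := by
      rw [e1]
      have := condExp_neg (μ := μ) (m := (MeasurableSpace.comap (x N) Real.measurableSpace)) (η k)
      exact this
    have e2 : (fun ω' => x₀ ω' - x N ω') = fun ω => -(∑ i ∈ Finset.range N, η i ω) := by
      funext ω
      rw [hx N ω]
      ring
    have r1 : μ[fun ω' => x₀ ω' - x N ω' | (MeasurableSpace.comap (x N) Real.measurableSpace)] =ᵐ[μ] fun ω => -((N : ℝ) * C ω) := by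
      rw [e2]
      have h5 := condExp_neg (μ := μ) (m := (MeasurableSpace.comap (x N) Real.measurableSpace)) (fun ω => ∑ i ∈ Finset.range N, η i ω)
      refine h5.trans ?_
      filter_upwards [hsum_condExp] with ω hω
      simp only [Pi.neg_apply, hω]
    filter_upwards [l1, r1] with ω h1 h2
    rw [h1, h2]
    field_simp
  · -- second identity
    have e3 : x k = fun ω => x N ω - η k ω := by
      funext ω
      rw [hx k ω, hx N ω, hN, Finset.sum_range_succ]
      ring
    have l2 : μ[x k | (MeasurableSpace.comap (x N) Real.measurableSpace)] =ᵐ[μ] fun ω => x N ω - C ω := by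
      rw [e3]
      have h6 := condExp_sub (m := (MeasurableSpace.comap (x N) Real.measurableSpace)) (hxint N) (hηint k)
      refine h6.trans ?_
      rw [hxNcond]
      exact Filter.EventuallyEq.rfl
    filter_upwards [l2, hrel] with ω h1 h2
    rw [h1]
    have hC : C ω = (N : ℝ)⁻¹ * (x N ω - (μ[x₀ | (MeasurableSpace.comap (x N) Real.measurableSpace)]) ω) := by
      field_simp
      linarith
    rw [hC]
    ring
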